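/- arXiv:2404.11218 — 3 statements merged into one kernel-verified Lean document; each statement's English description precedes it below -/
import Mathlib

section
/- Let x = ∑_{i=1}^n ω^{α_i}·a_i and y = ∑_{j=1}^m ω^{β_j}·b_j be nonzero ordinals in Cantor normal form, and let k ≥ 0 be the maximal index such that α_i = β_i and a_i = b_i for all i ≤ k (k = 0 if there is none). Assume k < n and k < m. Then the left subtraction x ∸ y is given by: (1) if α_{k+1} < β_{k+1} then x ∸ y = 0; (2) if α_{k+1} > β_{k+1} then x ∸ y = ∑_{i=k+1}^n ω^{α_i}·a_i; (3) if α_{k+1} = β_{k+1} and a_{k+1} > b_{k+1} then x ∸ y = ω^{α_{k+1}}·(a_{k+1} − b_{k+1}) + ∑_{i=k+2}^n ω^{α_i}·a_i; (4) if α_{k+1} = β_{k+1} and a_{k+1} < b_{k+1} then x ∸ y = 0. -/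
/-!
Once the common prefix is cancelled with `(p + u) - (p + v) = u - v`, both sides have the form
`ω ^ γ * c + r` with `r < ω ^ γ`. A smaller leading exponent, or a smaller coefficient, makes
the whole expression smaller, so the difference vanishes. Otherwise the remainder to be subtracted
is absorbed: `s < ω ^ γ ≤ x` gives `s + x = x`, hence `x - s = x`.
-/

open Ordinal

/-- The value of a Cantor normal form expression `∑_{i<n} ω^(α i) · (a i)`,
with the summands added in order of increasing index. -/
noncomputable def CNFsum (n : ℕ) (α : ℕ → Ordinal) (a : ℕ → ℕ) : Ordinal :=
  ((List.range n).map fun i => ω ^ α i * (a i : Ordinal)).sum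

namespace Ordinal

variable {γ δ r s x : Ordinal}

theorem omega0_opow_mul_add_lt_omega0_opow (hr : r < ω ^ γ) (hγδ : γ < δ) (p : ℕ) :
    ω ^ γ * p + r < ω ^ δ :=
  isPrincipal_add_omega0_opow δ (opow_mul_lt_opow (natCast_lt_omega0 p) hγδ)
    (hr.trans ((opow_lt_opow_iff_right one_lt_omega0).2 hγδ))

theorem mul_add_lt_mul_add_one {c : Ordinal} (hr : r < c) (p : Ordinal) :
    c * p + r < c * (p + 1) := by
  rw [mul_add_one]
  exact add_lt_add_right hr _

theorem le_mul_natCast_add {q : ℕ} (hq : 0 < q) : γ ≤ γ * q + s :=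
  (le_mul_of_one_le_right zero_le (mod_cast hq)).trans le_self_add

theorem sub_eq_self_of_lt_omega0_opow (hs : s < ω ^ γ) (hx : ω ^ γ ≤ x) : x - s = x :=
  sub_eq_of_add_eq (add_of_omega0_opow_le hs hx)

theorem omega0_opow_mul_add_sub_omega0_opow_mul_add {p q : ℕ} (hqp : q < p)
    (hs : s < ω ^ γ) : ω ^ γ * p + r - (ω ^ γ * q + s) = ω ^ γ * (p - q : ℕ) + r := by
  obtain ⟨d, rfl⟩ := Nat.exists_eq_add_of_le hqp.le
  rw [Nat.add_sub_cancel_left, Nat.cast_add, mul_add, add_assoc, add_sub_add_cancel]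
  exact sub_eq_self_of_lt_omega0_opow hs (le_mul_natCast_add (by omega))

end Ordinal

section CNFsum

variable {α β : ℕ → Ordinal} {a b : ℕ → ℕ}

theorem CNFsum_succ (n : ℕ) (α : ℕ → Ordinal) (a : ℕ → ℕ) :
    CNFsum (n + 1) α a = CNFsum n α a + ω ^ α n * a n := by
  simp [CNFsum, List.range_succ]

theorem CNFsum_congr {n : ℕ} (h : ∀ i < n, α i = β i ∧ a i = b i) :
    CNFsum n α a = CNFsum n β b := by
  refine congrArg List.sum (List.map_congr_left fun i hi => ?_)
  obtain ⟨hαβ, hab⟩ := h i (List.mem_range.1 hi)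
  rw [hαβ, hab]

theorem CNFsum_eq_add_tail {k n : ℕ} (h : k ≤ n) (α : ℕ → Ordinal) (a : ℕ → ℕ) :
    CNFsum n α a = CNFsum k α a + CNFsum (n - k) (fun i => α (k + i)) (fun i => a (k + i)) := by
  obtain ⟨l, rfl⟩ := Nat.exists_eq_add_of_le h
  rw [Nat.add_sub_cancel_left, CNFsum, List.range_add, List.map_append, List.sum_append,
    List.map_map]
  rfl

theorem CNFsum_tail_eq_add_tail {k n : ℕ} (h : k < n) (α : ℕ → Ordinal) (a : ℕ → ℕ) :
    CNFsum (n - k) (fun i => α (k + i)) (fun i => a (k + i)) =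
      ω ^ α k * a k +
        CNFsum (n - (k + 1)) (fun i => α (k + 1 + i)) (fun i => a (k + 1 + i)) := by
  refine (add_left_cancel_iff (a := CNFsum k α a)).1 ?_
  rw [← CNFsum_eq_add_tail h.le, ← add_assoc, ← CNFsum_succ, ← CNFsum_eq_add_tail h]

theorem CNFsum_lt_omega0_opow {n : ℕ} {δ : Ordinal} (h : ∀ i < n, α i < δ) :
    CNFsum n α a < ω ^ δ := by
  induction n with
  | zero => simpa [CNFsum] using opow_pos δ omega0_pos
  | succ n ih =>
    rw [CNFsum_succ]
    exact isPrincipal_add_omega0_opow δ (ih fun i hi => h i (by omega))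
      (opow_mul_lt_opow (natCast_lt_omega0 _) (h n n.lt_succ_self))

end CNFsum

theorem cnf_sub_general (n m k : ℕ)
    (α β : ℕ → Ordinal) (a b : ℕ → ℕ)
    (hα : ∀ i j, i < j → j < n → α j < α i)
    (hβ : ∀ i j, i < j → j < m → β j < β i)
    (ha : ∀ i, i < n → 0 < a i) (hb : ∀ j, j < m → 0 < b j)
    (hkn : k < n) (hkm : k < m)
    (hpre : ∀ i, i < k → α i = β i ∧ a i = b i) :
    -- (1)
    (α k < β k → CNFsum n α a - CNFsum m β b = 0) ∧
    -- (2)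
    (β k < α k → CNFsum n α a - CNFsum m β b =
      CNFsum (n - k) (fun i => α (k + i)) (fun i => a (k + i))) ∧
    -- (3)
    (α k = β k → b k < a k → CNFsum n α a - CNFsum m β b =
      ω ^ α k * ((a k - b k : ℕ) : Ordinal) +
        CNFsum (n - (k + 1)) (fun i => α (k + 1 + i)) (fun i => a (k + 1 + i))) ∧
    -- (4)
    (α k = β k → a k < b k → CNFsum n α a - CNFsum m β b = 0) := by
  rw [CNFsum_eq_add_tail hkn.le, CNFsum_eq_add_tail hkm.le, CNFsum_congr hpre,
    add_sub_add_cancel, CNFsum_tail_eq_add_tail hkn, CNFsum_tail_eq_add_tail hkm]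
  set r := CNFsum (n - (k + 1)) (fun i => α (k + 1 + i)) (fun i => a (k + 1 + i))
  set s := CNFsum (m - (k + 1)) (fun i => β (k + 1 + i)) (fun i => b (k + 1 + i))
  have hr : r < ω ^ α k := CNFsum_lt_omega0_opow fun i _ => hα k _ (by omega) (by omega)
  have hs : s < ω ^ β k := CNFsum_lt_omega0_opow fun i _ => hβ k _ (by omega) (by omega)
  refine ⟨fun hlt => ?_, fun hgt => ?_, fun heq hgt => ?_, fun heq hlt => ?_⟩
  · exact Ordinal.sub_eq_zero_iff_le.2
      ((omega0_opow_mul_add_lt_omega0_opow hr hlt _).le.trans (le_mul_natCast_add (hb k hkm)))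
  · exact sub_eq_self_of_lt_omega0_opow (omega0_opow_mul_add_lt_omega0_opow hs hgt _)
      (le_mul_natCast_add (ha k hkn))
  · rw [← heq]
    exact omega0_opow_mul_add_sub_omega0_opow_mul_add hgt (heq ▸ hs)
  · rw [← heq]
    refine Ordinal.sub_eq_zero_iff_le.2 ((mul_add_lt_mul_add_one hr _).le.trans ?_)
    exact (mul_le_mul_right (mod_cast hlt) _).trans le_self_add

/-- Left subtraction of two nonzero ordinals given in Cantor normal form, where `k` is the
maximal index such that the two expressions agree on the first `k` terms (and both expressions
have more than `k` terms). -/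
theorem cnf_sub (n m k : ℕ) (hn : 1 ≤ n) (hm : 1 ≤ m)
    (α β : ℕ → Ordinal) (a b : ℕ → ℕ)
    (hα : ∀ i j, i < j → j < n → α j < α i)
    (hβ : ∀ i j, i < j → j < m → β j < β i)
    (ha : ∀ i, i < n → 0 < a i) (hb : ∀ j, j < m → 0 < b j)
    (hkn : k < n) (hkm : k < m)
    (hpre : ∀ i, i < k → α i = β i ∧ a i = b i)
    (hmax : ¬(α k = β k ∧ a k = b k)) :
    -- (1)
    (α k < β k → CNFsum n α a - CNFsum m β b = 0) ∧
    -- (2)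
    (β k < α k → CNFsum n α a - CNFsum m β b =
      CNFsum (n - k) (fun i => α (k + i)) (fun i => a (k + i))) ∧
    -- (3)
    (α k = β k → b k < a k → CNFsum n α a - CNFsum m β b =
      ω ^ α k * ((a k - b k : ℕ) : Ordinal) +
        CNFsum (n - (k + 1)) (fun i => α (k + 1 + i)) (fun i => a (k + 1 + i))) ∧
    -- (4)
    (α k = β k → a k < b k → CNFsum n α a - CNFsum m β b = 0) :=
  cnf_sub_general n m k α β a b hα hβ ha hb hkn hkm hpre
end

section
/- Let β ≥ 1 and θ be ordinals and let H : Ordinal → Ordinal → Prop (H η δ read as: stage η of the δ-th flow) satisfy: (a) for every δ and every η with 1 ≤ η ≤ β, (∀η' < η, H η' δ) implies H η δ; (b) for every δ, H β δ ↔ H 0 (δ+1); (c) for every limit ordinal δ, (∀δ' < δ, H 0 δ') implies H 0 δ. Define I : Ordinal → Prop by I τ = H (τ ∸ β·(τ/β)) (τ/β), where ∸ is left subtraction and / is left division of ordinals. Then I 0 ↔ H 0 0, I (β·(θ+1)) ↔ H 0 (θ+1), and for all τ with 1 ≤ τ ≤ β·(θ+1), (∀ζ < τ, I ζ) implies I τ;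 consequently H 0 0 implies H 0 (θ+1). -/
/-!
Write `τ = β·δ + η` with `η < β` (left division with remainder), so that `glueFamily β H τ` is
`H η δ` and the order on ordinals is the lexicographic order on `(δ, η)`. Progressiveness of the
glued predicate then splits into three cases: `η ≠ 0` is progressiveness of the `δ`-th flow
(hypothesis (a)); `η = 0` with `δ` a successor `δ' + 1` is the end `H β δ'` of the previous flow,
obtained from (a) at `η = β` and transported by (b); `η = 0` with `δ` a limit is (c).
Transfinite induction from `H 0 0` then reaches `β·(θ+1)`.
-/

/-- Transfinite gluing of a family of flows: stage `τ` of the glued flow is stage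
`τ - β·(τ/β)` of the `(τ/β)`-th flow (using left subtraction and left division of ordinals). -/
noncomputable def glueFamily (β : Ordinal) (H : Ordinal → Ordinal → Prop) : Ordinal → Prop :=
  fun τ => H (τ - β * (τ / β)) (τ / β)

open Ordinal

section
variable {β : Ordinal} {H : Ordinal → Ordinal → Prop}

theorem glueFamily_mul_add (hβ : β ≠ 0) (δ : Ordinal) {η : Ordinal} (hη : η < β) :
    glueFamily β H (β * δ + η) ↔ H η δ := by
  have hdiv : (β * δ + η) / β = δ := by
    rw [mul_add_div _ hβ, div_eq_zero_of_lt hη, add_zero]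
  rw [glueFamily, hdiv, add_sub_cancel]

theorem glueFamily_mul (hβ : β ≠ 0) (δ : Ordinal) : glueFamily β H (β * δ) ↔ H 0 δ := by
  simpa using glueFamily_mul_add (H := H) hβ δ (pos_iff_ne_zero.mpr hβ)

theorem stage_of_forall_mul_add_lt (hβ : 1 ≤ β)
    (ha : ∀ δ η, 1 ≤ η → η ≤ β → (∀ η' < η, H η' δ) → H η δ)
    (hb : ∀ δ, H β δ → H 0 (δ + 1))
    (hc : ∀ δ : Ordinal, Order.IsSuccLimit δ → (∀ δ' < δ, H 0 δ') → H 0 δ)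
    {δ η : Ordinal} (hη : η < β) (hne : β * δ + η ≠ 0)
    (h : ∀ δ' η', η' < β → β * δ' + η' < β * δ + η → H η' δ') : H η δ := by
  have hβpos : 0 < β := zero_lt_one.trans_le hβ
  rcases eq_or_ne η 0 with rfl | hη0
  · rcases zero_or_succ_or_isSuccLimit δ with rfl | ⟨δ', rfl⟩ | hlim
    · simp at hne
    · rw [Order.succ_eq_add_one]
      refine hb δ' (ha δ' β hβ le_rfl fun η' hη' => h δ' η' hη' ?_)
      calc β * δ' + η' < β * δ' + β := add_lt_add_right hη' _
        _ = β * (δ' + 1) + 0 := by rw [mul_add_one, add_zero]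
    · refine hc δ hlim fun δ' hδ' => h δ' 0 hβpos ?_
      simpa using mul_lt_mul_of_pos_left hδ' hβpos
  · exact ha δ η (Order.one_le_iff_ne_zero.mpr hη0) hη.le fun η' hη' =>
      h δ η' (hη'.trans hη) (add_lt_add_right hη' _)

theorem glueFamily_of_forall_lt (hβ : 1 ≤ β)
    (ha : ∀ δ η, 1 ≤ η → η ≤ β → (∀ η' < η, H η' δ) → H η δ)
    (hb : ∀ δ, H β δ → H 0 (δ + 1))
    (hc : ∀ δ : Ordinal, Order.IsSuccLimit δ → (∀ δ' < δ, H 0 δ') → H 0 δ)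
    {τ : Ordinal} (hτ : τ ≠ 0) (h : ∀ ζ < τ, glueFamily β H ζ) : glueFamily β H τ := by
  have hβ0 : β ≠ 0 := Order.one_le_iff_ne_zero.mp hβ
  rw [← div_add_mod τ β] at hτ h ⊢
  rw [glueFamily_mul_add hβ0 _ (mod_lt τ hβ0)]
  exact stage_of_forall_mul_add_lt hβ ha hb hc (mod_lt τ hβ0) hτ fun δ' η' hη' hlt =>
    (glueFamily_mul_add hβ0 δ' hη').mp (h _ hlt)

theorem glueFamily_of_start (hβ : 1 ≤ β)
    (ha : ∀ δ η, 1 ≤ η → η ≤ β → (∀ η' < η, H η' δ) → H η δ)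
    (hb : ∀ δ, H β δ → H 0 (δ + 1))
    (hc : ∀ δ : Ordinal, Order.IsSuccLimit δ → (∀ δ' < δ, H 0 δ') → H 0 δ)
    (h₀ : H 0 0) (τ : Ordinal) : glueFamily β H τ := by
  induction τ using WellFoundedLT.induction with
  | ind τ ih =>
    rcases eq_or_ne τ 0 with rfl | hτ
    · simpa using (glueFamily_mul (Order.one_le_iff_ne_zero.mp hβ) 0).mpr h₀
    · exact glueFamily_of_forall_lt hβ ha hb hc hτ ih

end

/-- Transfinite gluing of `θ + 1` many flows of length `β` into one flow of length
`β·(θ + 1)`: if each flow is progressive on `[1, β]`, the end of each flow is the start of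
the next, and the starts are continuous at limit stages, then the glued predicate `I` satisfies
`I 0 ↔ H 0 0`, `I (β·(θ+1)) ↔ H 0 (θ+1)`, and is progressive on `[1, β·(θ+1)]`; consequently
`H 0 0` implies `H 0 (θ+1)`. -/
theorem glue_family_flows (β θ : Ordinal) (hβ : 1 ≤ β)
    (H : Ordinal → Ordinal → Prop)
    (ha : ∀ δ η, 1 ≤ η → η ≤ β → (∀ η' < η, H η' δ) → H η δ)
    (hb : ∀ δ, H β δ ↔ H 0 (δ + 1))
    (hc : ∀ δ : Ordinal, Order.IsSuccLimit δ → (∀ δ' < δ, H 0 δ') → H 0 δ) :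
    (glueFamily β H 0 ↔ H 0 0) ∧
    (glueFamily β H (β * (θ + 1)) ↔ H 0 (θ + 1)) ∧
    (∀ τ, 1 ≤ τ → τ ≤ β * (θ + 1) → (∀ ζ < τ, glueFamily β H ζ) → glueFamily β H τ) ∧
    (H 0 0 → H 0 (θ + 1)) := by
  have hβ0 : β ≠ 0 := Order.one_le_iff_ne_zero.mp hβ
  have hend := glueFamily_mul (H := H) hβ0 (θ + 1)
  have hb' : ∀ δ, H β δ → H 0 (δ + 1) := fun δ => (hb δ).mp
  refine ⟨by simpa using glueFamily_mul (H := H) hβ0 0, hend, ?_, ?_⟩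
  · exact fun τ hτ _ => glueFamily_of_forall_lt hβ ha hb' hc (Order.one_le_iff_ne_zero.mp hτ)
  · exact fun h₀ => hend.mp (glueFamily_of_start hβ ha hb' hc h₀ _)
end

section
/- Let B, C : ℕ → ℕ → Prop, let s : ℕ → ℕ satisfy s x ≥ 1 for all x, and assume disjointness: for every x, either ∀y ≤ s x, ¬B x y, or ∀z ≤ s x, ¬C x z. Define A x w y z := (w = 0 → ¬B x y) ∧ (w ≠ 0 → ¬C x z). Suppose f : ℕ → ℕ → ℕ → ℕ and g₀, g₁, h₀, h₁ : ℕ → ℕ → ℕ → ℕ → ℕ → ℕ satisfy, for all x and all w₀, w₁, y, z ≤ s x: f x w₀ w₁ ≤ s x; g₀ x w₀ w₁ y z ≤ s x; g₁ x w₀ w₁ y z ≤ s x; h₀ x w₀ w₁ y z ≤ s x; h₁ x w₀ w₁ y z ≤ s x; and (A x w₀ (g₀ x w₀ w₁ y z) (h₀ x w₀ w₁ y z) ∨ A x w₁ (g₁ x w₀ w₁ y z) (h₁ x w₀ w₁ y z)) → A x (f x w₀ w₁) y z. Then the set S = {x : ℕ | f x 0 1 ≠ 0} is a separator for the sets U =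 {x | ∃y ≤ s x, B x y} and V = {x | ∃z ≤ s x, C x z}: U ⊆ S and S ∩ V = ∅. -/
/-- The two-turn game associated with a pair of disjoint NP-like sets: player I's move `w`
selects one of the two predicates, and the play is winning if the corresponding witness
fails. -/
def Agame (B C : ℕ → ℕ → Prop) (x w y z : ℕ) : Prop :=
  (w = 0 → ¬B x y) ∧ (w ≠ 0 → ¬C x z)

/-- A deterministic 2-turn game reduction from the game `A(x, w, y, z)` to the disjunction
game `A(x, w₀, y₀, z₀) ∨ A(x, w₁, y₁, z₁)` (with all moves bounded by `s x`) yields a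
separator `S = {x | f x 0 1 ≠ 0}` of the disjoint sets `U = {x | ∃ y ≤ s x, B x y}` and
`V = {x | ∃ z ≤ s x, C x z}`: that is, `U ⊆ S` and `S ∩ V = ∅`. -/
theorem reduction_gives_separator (B C : ℕ → ℕ → Prop) (s : ℕ → ℕ)
    (hs : ∀ x, 1 ≤ s x)
    (hdisj : ∀ x, (∀ y ≤ s x, ¬B x y) ∨ (∀ z ≤ s x, ¬C x z))
    (f : ℕ → ℕ → ℕ → ℕ) (g₀ g₁ h₀ h₁ : ℕ → ℕ → ℕ → ℕ → ℕ → ℕ)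
    (hf : ∀ x, ∀ w₀ ≤ s x, ∀ w₁ ≤ s x, ∀ y ≤ s x, ∀ z ≤ s x, f x w₀ w₁ ≤ s x)
    (hg₀ : ∀ x, ∀ w₀ ≤ s x, ∀ w₁ ≤ s x, ∀ y ≤ s x, ∀ z ≤ s x, g₀ x w₀ w₁ y z ≤ s x)
    (hg₁ : ∀ x, ∀ w₀ ≤ s x, ∀ w₁ ≤ s x, ∀ y ≤ s x, ∀ z ≤ s x, g₁ x w₀ w₁ y z ≤ s x)
    (hh₀ : ∀ x, ∀ w₀ ≤ s x, ∀ w₁ ≤ s x, ∀ y ≤ s x, ∀ z ≤ s x, h₀ x w₀ w₁ y z ≤ s x)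
    (hh₁ : ∀ x, ∀ w₀ ≤ s x, ∀ w₁ ≤ s x, ∀ y ≤ s x, ∀ z ≤ s x, h₁ x w₀ w₁ y z ≤ s x)
    (hred : ∀ x, ∀ w₀ ≤ s x, ∀ w₁ ≤ s x, ∀ y ≤ s x, ∀ z ≤ s x,
      (Agame B C x w₀ (g₀ x w₀ w₁ y z) (h₀ x w₀ w₁ y z) ∨
        Agame B C x w₁ (g₁ x w₀ w₁ y z) (h₁ x w₀ w₁ y z)) →
      Agame B C x (f x w₀ w₁) y z) :
    {x : ℕ | ∃ y ≤ s x, B x y} ⊆ {x : ℕ | f x 0 1 ≠ 0} ∧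
      {x : ℕ | f x 0 1 ≠ 0} ∩ {x : ℕ | ∃ z ≤ s x, C x z} = ∅ := by
  have key : ∀ x, ∀ y ≤ s x, ∀ z ≤ s x, Agame B C x (f x 0 1) y z := by
    intro x y hy z hz
    have h0 : (0 : ℕ) ≤ s x := Nat.zero_le _
    have h1 : (1 : ℕ) ≤ s x := hs x
    apply hred x 0 h0 1 h1 y hy z hz
    rcases hdisj x with h | h
    · left
      exact ⟨fun _ => h _ (hg₀ x 0 h0 1 h1 y hy z hz), fun h' => absurd rfl h'⟩
    · right
      exact ⟨fun h' => by simp at h', fun _ => h _ (hh₁ x 0 h0 1 h1 y hy z hz)⟩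
  constructor
  · rintro x ⟨y, hy, hB⟩
    intro hf0
    exact (key x y hy 0 (Nat.zero_le _)).1 hf0 hB
  · ext x
    simp only [Set.mem_inter_iff, Set.mem_setOf_eq, Set.mem_empty_iff_false, iff_false,
      not_and]
    rintro hf0 ⟨z, hz, hC⟩
    exact (key x 0 (Nat.zero_le _) z hz).2 hf0 hC
end
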